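/- arXiv:2505.24254 — 2 statements merged into one kernel-verified Lean document; each statement's English description precedes it below -/
import Mathlib

section
/- Let m ≥ n and let A ∈ ℝ^{m×n} have a thin singular value decomposition A = W Σ Vᵀ (W ∈ ℝ^{m×n} with WᵀW = I_n, V ∈ ℝ^{n×n} orthogonal, Σ ∈ ℝ^{n×n} diagonal with nonnegative entries). Then for every matrix Q ∈ ℝ^{m×n} with orthonormal columns (QᵀQ = I_n), one has ‖A − W Vᵀ‖_F ≤ ‖A − Q‖_F; that is, W Vᵀ is a nearest matrix with orthonormal columns to A in Frobenius norm. -/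
open Matrix

/-- Frobenius norm of a real matrix: ‖A‖_F = sqrt(tr(AᵀA)). -/
noncomputable def frobNorm {m n : ℕ} (A : Matrix (Fin m) (Fin n) ℝ) : ℝ :=
  Real.sqrt ((Aᵀ * A).trace)

theorem nearest_orthonormal_columns (m n : ℕ) (hmn : n ≤ m)
    (A W : Matrix (Fin m) (Fin n) ℝ) (S V : Matrix (Fin n) (Fin n) ℝ)
    (hW : Wᵀ * W = 1) (hV : Vᵀ * V = 1)
    (hS : S.IsDiag) (hSnonneg : ∀ i, 0 ≤ S i i)
    (hSVD : A = W * S * Vᵀ) :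
    ∀ Q : Matrix (Fin m) (Fin n) ℝ, Qᵀ * Q = 1 →
      frobNorm (A - W * Vᵀ) ≤ frobNorm (A - Q) := by
  have hVVt : V * Vᵀ = 1 := mul_eq_one_comm.mp hV
  -- key: for any Q with orthonormal columns, trace (Qᵀ * A) ≤ S.trace
  have key : ∀ Q : Matrix (Fin m) (Fin n) ℝ, Qᵀ * Q = 1 →
      (Qᵀ * A).trace ≤ S.trace := by
    intro Q hQ
    have hM : ∀ i, (Vᵀ * Qᵀ * W) i i ≤ 1 := by
      intro i
      set B := Q * V with hB
      have h1 : ∑ k, B k i ^ 2 = 1 := by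
        have hQV : Bᵀ * B = 1 := by
          rw [hB, Matrix.transpose_mul, Matrix.mul_assoc, ← Matrix.mul_assoc Qᵀ, hQ,
            Matrix.one_mul, hV]
        have := congrFun (congrFun hQV i) i
        simpa [Matrix.mul_apply, Matrix.one_apply, sq] using this
      have h2 : ∑ k, W k i ^ 2 = 1 := by
        have := congrFun (congrFun hW i) i
        simpa [Matrix.mul_apply, Matrix.one_apply, sq] using this
      have hcs := Finset.sum_mul_sq_le_sq_mul_sq Finset.univ
        (fun k => B k i) (fun k => W k i)
      rw [h1, h2, mul_one] at hcs
      have heq : (Vᵀ * Qᵀ * W) i i = ∑ k, B k i * W k i := by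
        have : Vᵀ * Qᵀ = Bᵀ := by rw [hB, Matrix.transpose_mul]
        rw [this]
        simp [Matrix.mul_apply]
      rw [heq]
      nlinarith [hcs]
    have htr : (Qᵀ * A).trace = ∑ i, (Vᵀ * Qᵀ * W) i i * S i i := by
      rw [hSVD, show Qᵀ * (W * S * Vᵀ) = (Qᵀ * W * S) * Vᵀ by
          simp [Matrix.mul_assoc],
        Matrix.trace_mul_comm, show Vᵀ * (Qᵀ * W * S) = (Vᵀ * Qᵀ * W) * S by
          simp [Matrix.mul_assoc]]
      rw [Matrix.trace]
      refine Finset.sum_congr rfl fun i _ => ?_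
      rw [Matrix.diag_apply, Matrix.mul_apply]
      rw [Finset.sum_eq_single i]
      · intro j _ hj
        rw [hS hj, mul_zero]
      · intro h; exact absurd (Finset.mem_univ i) h
    rw [htr, Matrix.trace]
    refine Finset.sum_le_sum fun i _ => ?_
    calc (Vᵀ * Qᵀ * W) i i * S i i ≤ 1 * S i i :=
          mul_le_mul_of_nonneg_right (hM i) (hSnonneg i)
      _ = S i i := one_mul _
  -- the squared norm formula
  have sqnorm : ∀ Q : Matrix (Fin m) (Fin n) ℝ, Qᵀ * Q = 1 →
      ((A - Q)ᵀ * (A - Q)).trace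
        = (Aᵀ * A).trace - 2 * (Qᵀ * A).trace + n := by
    intro Q hQ
    have h1 : (A - Q)ᵀ * (A - Q) = Aᵀ * A - Qᵀ * A - Aᵀ * Q + Qᵀ * Q := by
      rw [Matrix.transpose_sub]
      simp only [Matrix.mul_sub, Matrix.sub_mul]
      abel
    rw [h1, hQ]
    have h2 : (Aᵀ * Q).trace = (Qᵀ * A).trace := by
      rw [← Matrix.trace_transpose (Aᵀ * Q), Matrix.transpose_mul, Matrix.transpose_transpose]
    simp only [Matrix.trace_add, Matrix.trace_sub, h2, Matrix.trace_one]
    simp [Fintype.card_fin]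
    ring
  intro Q hQ
  have hQ0 : (W * Vᵀ)ᵀ * (W * Vᵀ) = 1 := by
    rw [Matrix.transpose_mul, Matrix.transpose_transpose,
      show V * Wᵀ * (W * Vᵀ) = V * (Wᵀ * W) * Vᵀ by simp [Matrix.mul_assoc],
      hW, Matrix.mul_one, hVVt]
  have htr0 : ((W * Vᵀ)ᵀ * A).trace = S.trace := by
    rw [hSVD, Matrix.transpose_mul, Matrix.transpose_transpose,
      show V * Wᵀ * (W * S * Vᵀ) = V * ((Wᵀ * W) * S) * Vᵀ by simp [Matrix.mul_assoc],
      hW, Matrix.one_mul, Matrix.trace_mul_comm (V * S) Vᵀ, ← Matrix.mul_assoc, hV,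
      Matrix.one_mul]
  unfold frobNorm
  apply Real.sqrt_le_sqrt
  rw [sqnorm _ hQ0, sqnorm _ hQ, htr0]
  have := key Q hQ
  linarith
end

section
/- Let m ≥ n and let A ∈ ℝ^{m×n} have a thin singular value decomposition A = W Σ Vᵀ (W ∈ ℝ^{m×n} with WᵀW = I_n, V ∈ ℝ^{n×n} orthogonal, Σ diagonal with nonnegative entries). Then for every Q ∈ ℝ^{m×n} with QᵀQ = I_n, ‖A − Q‖_F² ≥ ‖A‖_F² + n − 2·tr(Σ), and equality holds for Q = W Vᵀ. -/
open Matrix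

lemma trace_tmul_eq {m n : ℕ} (M : Matrix (Fin m) (Fin n) ℝ) :
    (Mᵀ * M).trace = ∑ j, ∑ i, M i j ^ 2 := by
  simp [Matrix.trace, Matrix.mul_apply, Matrix.diag, sq]

lemma frob_sq_eq {m n : ℕ} (M : Matrix (Fin m) (Fin n) ℝ) :
    frobNorm M ^ 2 = (Mᵀ * M).trace := by
  rw [frobNorm, Real.sq_sqrt]
  rw [trace_tmul_eq]
  positivity

theorem frob_dist_sq_bound (m n : ℕ) (hmn : n ≤ m)
    (A W : Matrix (Fin m) (Fin n) ℝ) (S V : Matrix (Fin n) (Fin n) ℝ)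
    (hW : Wᵀ * W = 1) (hV : Vᵀ * V = 1)
    (hS : S.IsDiag) (hSnonneg : ∀ i, 0 ≤ S i i)
    (hSVD : A = W * S * Vᵀ) :
    (∀ Q : Matrix (Fin m) (Fin n) ℝ, Qᵀ * Q = 1 →
      (frobNorm (A - Q)) ^ 2 ≥ (frobNorm A) ^ 2 + n - 2 * S.trace) ∧
      (frobNorm (A - W * Vᵀ)) ^ 2 = (frobNorm A) ^ 2 + n - 2 * S.trace := by
  have hST : Sᵀ = S := by
    ext i j
    by_cases h : i = j
    · simp [h]
    · rw [Matrix.transpose_apply, hS h, hS (Ne.symm h)]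
  have hAT : Aᵀ = V * S * Wᵀ := by
    rw [hSVD, Matrix.transpose_mul, Matrix.transpose_mul, Matrix.transpose_transpose, hST,
      Matrix.mul_assoc]
  -- expansion lemma
  have expand : ∀ Q : Matrix (Fin m) (Fin n) ℝ, Qᵀ * Q = 1 →
      (frobNorm (A - Q)) ^ 2 = (frobNorm A) ^ 2 + n - 2 * (Aᵀ * Q).trace := by
    intro Q hQ
    rw [frob_sq_eq, frob_sq_eq]
    have hQA : (Qᵀ * A).trace = (Aᵀ * Q).trace := by
      rw [← Matrix.trace_transpose (Qᵀ * A), Matrix.transpose_mul, Matrix.transpose_transpose]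
    have : (A - Q)ᵀ * (A - Q) = Aᵀ * A - Aᵀ * Q - Qᵀ * A + Qᵀ * Q := by
      rw [Matrix.transpose_sub, Matrix.sub_mul, Matrix.mul_sub, Matrix.mul_sub]
      abel
    rw [this, Matrix.trace_add, Matrix.trace_sub, Matrix.trace_sub, hQA, hQ, Matrix.trace_one]
    simp
    ring
  -- trace (Aᵀ * Q) for orthonormal Q
  have key : ∀ Q : Matrix (Fin m) (Fin n) ℝ, Qᵀ * Q = 1 →
      (Aᵀ * Q).trace = ∑ i, S i i * (Wᵀ * (Q * V)) i i := by
    intro Q hQ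
    have h1 : Aᵀ * Q = V * (S * (Wᵀ * Q)) := by
      rw [hAT, Matrix.mul_assoc, Matrix.mul_assoc]
    rw [h1, Matrix.trace_mul_comm]
    have h2 : S * (Wᵀ * Q) * V = S * (Wᵀ * (Q * V)) := by
      simp only [Matrix.mul_assoc]
    rw [h2, Matrix.trace]
    apply Finset.sum_congr rfl
    intro i _
    rw [Matrix.diag_apply, Matrix.mul_apply]
    rw [Finset.sum_eq_single i]
    · intro k _ hk; rw [hS (Ne.symm hk), zero_mul]
    · intro h; exact absurd (Finset.mem_univ i) h
  -- diagonal entries bound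
  have diag_le' : ∀ (U : Matrix (Fin m) (Fin n) ℝ), Uᵀ * U = 1 →
      ∀ i, (Wᵀ * U) i i ≤ 1 := by
    intro U hU i
    have hWi : (∑ k, W k i ^ 2) = 1 := by
      have := congrArg (fun M => M i i) hW
      simp [Matrix.mul_apply, sq] at this ⊢
      simpa using this
    have hUi : (∑ k, U k i ^ 2) = 1 := by
      have := congrArg (fun M => M i i) hU
      simp [Matrix.mul_apply, sq] at this ⊢
      simpa using this
    have hZ : (Wᵀ * U) i i = ∑ k, W k i * U k i := by
      simp [Matrix.mul_apply]
    have hcs := Finset.sum_mul_sq_le_sq_mul_sq Finset.univ (fun k => W k i)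
      (fun k => U k i)
    rw [hWi, hUi, one_mul] at hcs
    nlinarith [hcs, hZ]
  have diag_le : ∀ (Q : Matrix (Fin m) (Fin n) ℝ), Qᵀ * Q = 1 →
      ∀ i, (Wᵀ * (Q * V)) i i ≤ 1 := by
    intro Q hQ i
    apply diag_le' (Q * V) ?_ i
    rw [Matrix.transpose_mul, Matrix.mul_assoc, ← Matrix.mul_assoc Qᵀ, hQ, Matrix.one_mul, hV]
  refine ⟨?_, ?_⟩
  · intro Q hQ
    rw [expand Q hQ, key Q hQ]
    have : ∑ i, S i i * (Wᵀ * (Q * V)) i i ≤ S.trace := by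
      rw [Matrix.trace]
      apply Finset.sum_le_sum
      intro i _
      rw [Matrix.diag_apply]
      have := diag_le Q hQ i
      nlinarith [hSnonneg i]
    linarith
  · have hVVT : V * Vᵀ = 1 := (mul_eq_one_comm).mp hV
    have hQW : (W * Vᵀ)ᵀ * (W * Vᵀ) = 1 := by
      rw [Matrix.transpose_mul, Matrix.transpose_transpose, Matrix.mul_assoc,
        ← Matrix.mul_assoc Wᵀ, hW, Matrix.one_mul, hVVT]
    rw [expand (W * Vᵀ) hQW]
    have htr : (Aᵀ * (W * Vᵀ)).trace = S.trace := by
      have h3 : Aᵀ * (W * Vᵀ) = V * (S * Vᵀ) := by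
        rw [hAT]
        simp only [Matrix.mul_assoc]
        rw [← Matrix.mul_assoc Wᵀ, hW, Matrix.one_mul]
      rw [h3, Matrix.trace_mul_comm, Matrix.mul_assoc, hV, Matrix.mul_one]
    rw [htr]
end
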